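/- Two Ferrers boards B = (b_0,...,b_n) and B' = (b_0',...,b_n') with b_0 = b_0' = 0 satisfy f_{k,m}(B) = f_{k,m}(B') for all k if and only if the m-weight root vector ω_m(B) = (−b_0, m−b_1, 2m−b_2, ..., nm−b_n) is a rearrangement of ω_m(B'). -/

import Mathlib

/-- The `m`-falling factorial `x↓_{n,m} = x(x-m)(x-2m)⋯(x-(n-1)m)`. -/
def fallFact (x : ℤ) (n m : ℕ) : ℤ := ∏ i ∈ Finset.range n, (x - (m : ℤ) * i)

/-- The cells of the Ferrers board with column heights `b 0, b 1, …, b n`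
(columns 0-indexed, rows 1-indexed). -/
def cells0 (b : ℕ → ℕ) (n : ℕ) : Finset (ℕ × ℕ) :=
  ((Finset.Icc 1 ((Finset.range (n + 1)).sup b)) ×ˢ Finset.range (n + 1)).filter
    fun c => c.1 ≤ b c.2

/-- The `m`-weight of a file placement: `∏_i 1↓_{y_i,m}` where `y_i` is the number
of rooks in row `i`. -/
def wtm (m : ℕ) (F : Finset (ℕ × ℕ)) : ℤ :=
  ∏ i ∈ F.image Prod.fst, fallFact 1 ((F.filter fun c => c.1 = i).card) m

/-- `f_{k,m}(B)`: the sum of `m`-weights over all file placements (no two rooks in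
the same column) of `k` rooks on the board `B = (b_0, …, b_n)`. -/
def fkm (m : ℕ) (b : ℕ → ℕ) (n k : ℕ) : ℤ :=
  ∑ F ∈ (cells0 b n).powerset.filter
      (fun F => (∀ c ∈ F, ∀ c' ∈ F, c.2 = c'.2 → c = c') ∧ F.card = k),
    wtm m F

/-!
Adding a column `j` of height `b j ≥ b i` (for the earlier columns `i`) to a board with `j`
columns multiplies `∑ₖ f_{k,m} · x↓_{j-k,m}` by `x - (j m - b j)`: a rook in the new column
either is absent or sits in one of its `b j` rows. Hence this polynomial is
`∏ⱼ (x - (j m - b j))`, whose multiset of roots is `ω_m(B)`. The polynomials `x↓_{i,m}` are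
monic of degree `i`, hence linearly independent, so the polynomial and the numbers `f_{k,m}`
determine each other.
-/

open Finset Polynomial

def boardCells (b : ℕ → ℕ) (s : Finset ℕ) : Finset (ℕ × ℕ) :=
  s.biUnion fun j => Icc 1 (b j) ×ˢ {j}

lemma mem_boardCells {b : ℕ → ℕ} {s : Finset ℕ} {c : ℕ × ℕ} :
    c ∈ boardCells b s ↔ c.2 ∈ s ∧ c.1 ∈ Icc 1 (b c.2) := by
  obtain ⟨r, j⟩ := c
  simp [boardCells, and_comm]

lemma cells0_eq_boardCells (b : ℕ → ℕ) (n : ℕ) :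
    cells0 b n = boardCells b (range (n + 1)) := by
  ext ⟨r, j⟩
  simp only [cells0, mem_filter, mem_product, mem_Icc, mem_range, mem_boardCells]
  constructor
  · rintro ⟨⟨⟨h1, -⟩, hj⟩, hr⟩
    exact ⟨hj, h1, hr⟩
  · rintro ⟨hj, h1, hr⟩
    exact ⟨⟨⟨h1, hr.trans (le_sup (mem_range.mpr hj))⟩, hj⟩, hr⟩

def filePlacements (b : ℕ → ℕ) (s : Finset ℕ) (k : ℕ) : Finset (Finset (ℕ × ℕ)) :=
  (boardCells b s).powerset.filter
    fun F => (∀ c ∈ F, ∀ c' ∈ F, c.2 = c'.2 → c = c') ∧ F.card = k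

/-- `f_{k,m}` of the board restricted to the columns in `s`; allowing arbitrary column sets
lets the factorization start from the empty board. -/
def fileNumber (m : ℕ) (b : ℕ → ℕ) (s : Finset ℕ) (k : ℕ) : ℤ :=
  ∑ F ∈ filePlacements b s k, wtm m F

lemma fkm_eq_fileNumber (m : ℕ) (b : ℕ → ℕ) (n k : ℕ) :
    fkm m b n k = fileNumber m b (range (n + 1)) k := by
  rw [fkm, cells0_eq_boardCells]
  rfl

section FilePlacements

variable {b : ℕ → ℕ} {s : Finset ℕ} {j k : ℕ} {F : Finset (ℕ × ℕ)}

lemma mem_filePlacements :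
    F ∈ filePlacements b s k ↔
      F ⊆ boardCells b s ∧ (∀ c ∈ F, ∀ c' ∈ F, c.2 = c'.2 → c = c') ∧ #F = k := by
  simp only [filePlacements, mem_filter, mem_powerset]

lemma column_mem_of_mem_filePlacements (hF : F ∈ filePlacements b s k) {c : ℕ × ℕ}
    (hc : c ∈ F) : c.2 ∈ s :=
  (mem_boardCells.mp ((mem_filePlacements.mp hF).1 hc)).1

lemma card_le_of_mem_filePlacements (hF : F ∈ filePlacements b s k) : k ≤ #s := by
  obtain ⟨-, hinj, rfl⟩ := mem_filePlacements.mp hF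
  rw [← card_image_of_injOn fun c hc c' hc' => hinj c hc c' hc']
  exact card_le_card fun j hj => by
    obtain ⟨c, hc, rfl⟩ := mem_image.mp hj
    exact column_mem_of_mem_filePlacements hF hc

lemma filePlacements_zero : filePlacements b s 0 = {∅} := by
  ext F
  simp only [mem_filePlacements, card_eq_zero, mem_singleton]
  constructor
  · exact fun h => h.2.2
  · rintro rfl
    simp

lemma filter_filePlacements_insert_forall_ne (hj : j ∉ s) :
    {F ∈ filePlacements b (insert j s) k | ∀ c ∈ F, c.2 ≠ j} = filePlacements b s k := by
  ext F
  simp only [mem_filter, mem_filePlacements]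
  constructor
  · rintro ⟨⟨hsub, hinj, hcard⟩, hne⟩
    refine ⟨fun c hc => ?_, hinj, hcard⟩
    obtain ⟨hcol, hrow⟩ := mem_boardCells.mp (hsub hc)
    exact mem_boardCells.mpr ⟨(mem_insert.mp hcol).resolve_left (hne c hc), hrow⟩
  · rintro ⟨hsub, hinj, hcard⟩
    refine ⟨⟨fun c hc => ?_, hinj, hcard⟩, fun c hc h => hj (h ▸ ?_)⟩
    · obtain ⟨hcol, hrow⟩ := mem_boardCells.mp (hsub hc)
      exact mem_boardCells.mpr ⟨mem_insert_of_mem hcol, hrow⟩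
    · exact (mem_boardCells.mp (hsub hc)).1

lemma insert_mem_filePlacements (hj : j ∉ s) (hF : F ∈ filePlacements b s k) {r : ℕ}
    (hr : r ∈ Icc 1 (b j)) : insert (r, j) F ∈ filePlacements b (insert j s) (k + 1) := by
  obtain ⟨hsub, hinj, hcard⟩ := mem_filePlacements.mp hF
  have hnew : ∀ c ∈ F, c.2 ≠ j := fun c hc h =>
    hj (h ▸ column_mem_of_mem_filePlacements hF hc)
  refine mem_filePlacements.mpr ⟨insert_subset_iff.mpr ⟨?_, ?_⟩, ?_, ?_⟩
  · exact mem_boardCells.mpr ⟨mem_insert_self j s, hr⟩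
  · refine fun c hc => mem_boardCells.mpr ?_
    obtain ⟨hcol, hrow⟩ := mem_boardCells.mp (hsub hc)
    exact ⟨mem_insert_of_mem hcol, hrow⟩
  · simp only [mem_insert]
    rintro c (rfl | hc) c' (rfl | hc') h
    · rfl
    · exact absurd h.symm (hnew c' hc')
    · exact absurd h (hnew c hc)
    · exact hinj c hc c' hc' h
  · rw [card_insert_of_notMem fun h => hnew _ h rfl, hcard]

lemma filter_filePlacements_insert_not_forall_ne (hj : j ∉ s) :
    {F ∈ filePlacements b (insert j s) (k + 1) | ¬ ∀ c ∈ F, c.2 ≠ j} =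
      (filePlacements b s k ×ˢ Icc 1 (b j)).image fun p => insert (p.2, j) p.1 := by
  ext F
  simp only [mem_filter, mem_image, mem_product, not_forall, not_not, exists_prop]
  constructor
  · rintro ⟨hF, c, hc, hcj⟩
    obtain ⟨hsub, hinj, hcard⟩ := mem_filePlacements.mp hF
    refine ⟨(F.erase c, c.1), ⟨mem_filePlacements.mpr ⟨fun x hx => ?_, ?_, ?_⟩, ?_⟩, ?_⟩
    · obtain ⟨hxc, hx⟩ := mem_erase.mp hx
      obtain ⟨hcol, hrow⟩ := mem_boardCells.mp (hsub hx)
      refine mem_boardCells.mpr ⟨(mem_insert.mp hcol).resolve_left fun h => ?_, hrow⟩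
      exact hxc (hinj x hx c hc (h.trans hcj.symm))
    · exact fun x hx x' hx' => hinj x (mem_of_mem_erase hx) x' (mem_of_mem_erase hx')
    · rw [card_erase_of_mem hc, hcard, Nat.add_sub_cancel]
    · exact hcj ▸ (mem_boardCells.mp (hsub hc)).2
    · rw [← hcj, Prod.mk.eta, insert_erase hc]
  · rintro ⟨⟨F', r⟩, ⟨hF', hr⟩, rfl⟩
    exact ⟨insert_mem_filePlacements hj hF' hr, (r, j), mem_insert_self _ _, rfl⟩

lemma injOn_insert_column (hj : j ∉ s) :
    Set.InjOn (fun p : Finset (ℕ × ℕ) × ℕ => insert (p.2, j) p.1)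
      (filePlacements b s k ×ˢ Icc 1 (b j) : Finset _) := by
  rintro ⟨F, r⟩ hp ⟨F', r'⟩ hp' h
  simp only [coe_product, Set.mem_prod, mem_coe] at hp hp' h
  have hnew : ∀ {G}, G ∈ filePlacements b s k → ∀ r, (r, j) ∉ G := fun hG r hr =>
    hj (column_mem_of_mem_filePlacements hG hr)
  have hrr : r = r' := by
    have := h ▸ mem_insert_self (r, j) F
    rcases mem_insert.mp this with h' | h'
    · exact (Prod.mk.inj h').1
    · exact absurd h' (hnew hp'.1 r)
  subst hrr
  rw [← erase_insert (hnew hp.1 r), h, erase_insert (hnew hp'.1 r)]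

end FilePlacements

lemma fallFact_one_succ (m y : ℕ) :
    fallFact 1 (y + 1) m = (1 - (m : ℤ) * y) * fallFact 1 y m := by
  rw [fallFact, prod_range_succ, mul_comm]
  rfl

lemma wtm_eq_prod_of_subset (m : ℕ) {F : Finset (ℕ × ℕ)} {T : Finset ℕ}
    (hT : F.image Prod.fst ⊆ T) :
    wtm m F = ∏ i ∈ T, fallFact 1 #{c ∈ F | c.1 = i} m := by
  refine prod_subset hT fun i _ hi => ?_
  rw [filter_eq_empty_iff.mpr fun c hc hci => hi (mem_image.mpr ⟨c, hc, hci⟩)]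
  rfl

lemma wtm_insert (m : ℕ) {F : Finset (ℕ × ℕ)} {c : ℕ × ℕ} (hc : c ∉ F) :
    wtm m (insert c F) = (1 - (m : ℤ) * #{x ∈ F | x.1 = c.1}) * wtm m F := by
  set T := (insert c F).image Prod.fst
  have hcT : c.1 ∈ T := mem_image_of_mem _ (mem_insert_self c F)
  have hfilter : ∀ i, {x ∈ insert c F | x.1 = i} =
      if c.1 = i then insert c {x ∈ F | x.1 = i} else {x ∈ F | x.1 = i} :=
    fun i => filter_insert _ _ _
  rw [wtm_eq_prod_of_subset m subset_rfl,
    wtm_eq_prod_of_subset m (image_subset_image (subset_insert c F)),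
    ← mul_prod_erase T _ hcT, ← mul_prod_erase T _ hcT, hfilter, if_pos rfl,
    card_insert_of_notMem fun h => hc (mem_filter.mp h).1, fallFact_one_succ, mul_assoc]
  congr 2
  refine prod_congr rfl fun i hi => ?_
  rw [hfilter, if_neg (ne_of_mem_erase hi).symm]

lemma sum_wtm_insert_column (m h j : ℕ) {F : Finset (ℕ × ℕ)}
    (hrow : ∀ c ∈ F, c.1 ∈ Icc 1 h) (hcol : ∀ c ∈ F, c.2 ≠ j) :
    ∑ r ∈ Icc 1 h, wtm m (insert (r, j) F) = ((h : ℤ) - m * #F) * wtm m F := by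
  have hfiber : ∑ r ∈ Icc 1 h, (#{c ∈ F | c.1 = r} : ℤ) = #F := by
    exact_mod_cast (card_eq_sum_card_fiberwise hrow).symm
  rw [sum_congr rfl fun r _ => wtm_insert m fun hr => hcol _ hr rfl, ← sum_mul, sum_sub_distrib,
    ← mul_sum, hfiber]
  simp

section FileNumber

variable (m : ℕ) (b : ℕ → ℕ)

lemma fileNumber_zero (s : Finset ℕ) : fileNumber m b s 0 = 1 := by
  simp [fileNumber, filePlacements_zero, wtm]

lemma fileNumber_eq_zero_of_card_lt {s : Finset ℕ} {k : ℕ} (hk : #s < k) :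
    fileNumber m b s k = 0 :=
  sum_eq_zero fun _ hF => absurd (card_le_of_mem_filePlacements hF) (not_le.mpr hk)

/-- A rook in the new column `j`, placed in row `r`, multiplies the weight by `1 - m y_r`; the
`y_r` over the rows `r ≤ b j` add up to `k` because the shorter columns lie below `b j`. -/
lemma fileNumber_insert {s : Finset ℕ} {j : ℕ} (hj : j ∉ s) (hb : ∀ i ∈ s, b i ≤ b j)
    (k : ℕ) :
    fileNumber m b (insert j s) (k + 1) =
      fileNumber m b s (k + 1) + ((b j : ℤ) - m * k) * fileNumber m b s k := by
  rw [fileNumber, ← sum_filter_add_sum_filter_not _ fun F => ∀ c ∈ F, c.2 ≠ j,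
    filter_filePlacements_insert_forall_ne hj, filter_filePlacements_insert_not_forall_ne hj,
    sum_image (injOn_insert_column hj), sum_product, fileNumber, fileNumber, mul_sum]
  congr 1
  refine sum_congr rfl fun F hF => ?_
  obtain ⟨hsub, -, hcard⟩ := mem_filePlacements.mp hF
  rw [← hcard]
  refine sum_wtm_insert_column m (b j) j (fun c hc => ?_) fun c hc h =>
    hj (h ▸ column_mem_of_mem_filePlacements hF hc)
  obtain ⟨hcol, hrow⟩ := mem_boardCells.mp (hsub hc)
  exact mem_Icc.mpr ⟨(mem_Icc.mp hrow).1, (mem_Icc.mp hrow).2.trans (hb _ hcol)⟩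

end FileNumber

noncomputable def fallingPoly (m k : ℕ) : ℤ[X] := ∏ i ∈ range k, (X - C ((m : ℤ) * i))

lemma fallingPoly_succ (m k : ℕ) :
    fallingPoly m (k + 1) = fallingPoly m k * (X - C ((m : ℤ) * k)) :=
  prod_range_succ _ _

lemma degree_fallingPoly (m k : ℕ) : (fallingPoly m k).degree = k := by
  simp only [fallingPoly, degree_prod, degree_X_sub_C, sum_const, card_range, nsmul_one]

lemma linearIndependent_fallingPoly (m : ℕ) : LinearIndependent ℤ (fallingPoly m) :=
  Sequence.linearIndependent ⟨fallingPoly m, degree_fallingPoly m⟩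

lemma eq_of_sum_antidiagonal_fallingPoly_eq (m : ℕ) {n : ℕ} {g g' : ℕ → ℤ}
    (h : ∑ p ∈ antidiagonal n, C (g p.2) * fallingPoly m p.1 =
      ∑ p ∈ antidiagonal n, C (g' p.2) * fallingPoly m p.1) {k : ℕ} (hk : k ≤ n) :
    g k = g' k := by
  have hzero : ∑ i ∈ range (n + 1), (g (n - i) - g' (n - i)) • fallingPoly m i = 0 := by
    simp only [smul_eq_C_mul, C_sub, sub_mul, sum_sub_distrib]
    rw [sub_eq_zero,
      ← Nat.sum_antidiagonal_eq_sum_range_succ (fun i k => C (g k) * fallingPoly m i),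
      ← Nat.sum_antidiagonal_eq_sum_range_succ (fun i k => C (g' k) * fallingPoly m i), h]
  have := linearIndependent_iff'.mp (linearIndependent_fallingPoly m) _ _ hzero (n - k)
    (mem_range.mpr (by omega))
  rwa [Nat.sub_sub_self hk, sub_eq_zero] at this

theorem sum_antidiagonal_fileNumber_mul_fallingPoly (m : ℕ) {b : ℕ → ℕ} {n : ℕ}
    (hb : MonotoneOn b (Set.Iio n)) :
    ∑ p ∈ antidiagonal n, C (fileNumber m b (range n) p.2) * fallingPoly m p.1 =
      ∏ j ∈ range n, (X - C ((m : ℤ) * j - b j)) := by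
  induction n with
  | zero => simp [fileNumber_zero, fallingPoly]
  | succ n ih =>
    set f := fileNumber m b (range n)
    have hrec : ∀ k, fileNumber m b (range (n + 1)) (k + 1) =
        f (k + 1) + ((b n : ℤ) - m * k) * f k := by
      rw [range_add_one]
      exact fileNumber_insert m b notMem_range_self fun i hi =>
        hb ((mem_range.mp hi).trans n.lt_succ_self) n.lt_succ_self (mem_range.mp hi).le
    have hshift : fallingPoly m (n + 1) +
        ∑ p ∈ antidiagonal n, C (f (p.2 + 1)) * fallingPoly m p.1 =
        ∑ p ∈ antidiagonal n, C (f p.2) * fallingPoly m p.1 * (X - C ((m : ℤ) * p.1)) := by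
      have hlast : f (n + 1) = 0 := fileNumber_eq_zero_of_card_lt m b (by simp)
      rw [← one_mul (fallingPoly m (n + 1)), ← C_1, ← fileNumber_zero m b (range n),
        ← Nat.sum_antidiagonal_succ' (f := fun p => C (f p.2) * fallingPoly m p.1),
        Nat.sum_antidiagonal_succ, hlast, C_0, zero_mul, zero_add]
      simp only [fallingPoly_succ, mul_assoc]
    calc ∑ p ∈ antidiagonal (n + 1),
          C (fileNumber m b (range (n + 1)) p.2) * fallingPoly m p.1
        = (fallingPoly m (n + 1) +
            ∑ p ∈ antidiagonal n, C (f (p.2 + 1)) * fallingPoly m p.1) +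
          ∑ p ∈ antidiagonal n, C (f p.2) * fallingPoly m p.1 * C ((b n : ℤ) - m * p.2) := by
          simp only [Nat.sum_antidiagonal_succ', hrec, fileNumber_zero, C_1, one_mul, C_add,
            C_mul, add_mul, sum_add_distrib, add_assoc]
          congr 2
          exact sum_congr rfl fun p _ => by ring
      _ = ∑ p ∈ antidiagonal n,
            C (f p.2) * fallingPoly m p.1 * (X - C ((m : ℤ) * n - b n)) := by
          rw [hshift, ← sum_add_distrib]
          refine sum_congr rfl fun p hp => ?_
          rw [← mem_antidiagonal.mp hp]
          simp only [C_sub, C_mul, Nat.cast_add, C_add]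
          ring
      _ = ∏ j ∈ range (n + 1), (X - C ((m : ℤ) * j - b j)) := by
          rw [← sum_mul, ih (hb.mono (Set.Iio_subset_Iio n.le_succ)), prod_range_succ]

def rootVector (m : ℕ) (b : ℕ → ℕ) (s : Finset ℕ) : Multiset ℤ :=
  s.val.map fun j => (m : ℤ) * j - b j

lemma prod_X_sub_C_rootVector (m : ℕ) (b : ℕ → ℕ) (s : Finset ℕ) :
    ((rootVector m b s).map fun a => X - C a).prod =
      ∏ j ∈ s, (X - C ((m : ℤ) * j - b j)) := by
  rw [rootVector, Multiset.map_map]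
  rfl

theorem weight_equiv_iff_root_vector_general (m n : ℕ) (b b' : ℕ → ℕ)
    (hmono : ∀ j k, j ≤ k → k ≤ n → b j ≤ b k)
    (hmono' : ∀ j k, j ≤ k → k ≤ n → b' j ≤ b' k) :
    (∀ k, fkm m b n k = fkm m b' n k) ↔
      (Finset.range (n + 1)).val.map (fun j : ℕ => (m : ℤ) * j - b j) =
      (Finset.range (n + 1)).val.map (fun j : ℕ => (m : ℤ) * j - b' j) := by
  have factorization : ∀ c : ℕ → ℕ, (∀ j k, j ≤ k → k ≤ n → c j ≤ c k) →
      ∑ p ∈ antidiagonal (n + 1), C (fkm m c n p.2) * fallingPoly m p.1 =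
        ((rootVector m c (range (n + 1))).map fun a => X - C a).prod := fun c hc => by
    simp only [fkm_eq_fileNumber, prod_X_sub_C_rootVector]
    exact sum_antidiagonal_fileNumber_mul_fallingPoly m
      fun i _ j hj hij => hc i j hij (Nat.lt_succ_iff.mp hj)
  change _ ↔ rootVector m b (range (n + 1)) = rootVector m b' (range (n + 1))
  constructor
  · intro h
    rw [← roots_multiset_prod_X_sub_C (rootVector m b _), ← factorization b hmono,
      ← roots_multiset_prod_X_sub_C (rootVector m b' _), ← factorization b' hmono']
    simp only [h]
  · intro h k
    rcases le_or_gt k (n + 1) with hk | hk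
    · exact eq_of_sum_antidiagonal_fallingPoly_eq m
        (by rw [factorization b hmono, factorization b' hmono', h]) hk
    · have hcard : #(range (n + 1)) < k := (card_range (n + 1)).symm ▸ hk
      rw [fkm_eq_fileNumber, fkm_eq_fileNumber, fileNumber_eq_zero_of_card_lt m b hcard,
        fileNumber_eq_zero_of_card_lt m b' hcard]

/-- Proposition 7.1: two Ferrers boards `B = (b_0,…,b_n)`, `B' = (b'_0,…,b'_n)` with
`b_0 = b'_0 = 0` are `m`-weight file equivalent iff the `m`-weight root vector
`ω_m(B) = (jm − b_j)_j` is a rearrangement of `ω_m(B')`. -/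
theorem weight_equiv_iff_root_vector (m n : ℕ) (hm : 0 < m) (b b' : ℕ → ℕ)
    (hb0 : b 0 = 0) (hb'0 : b' 0 = 0)
    (hmono : ∀ j k, j ≤ k → k ≤ n → b j ≤ b k)
    (hmono' : ∀ j k, j ≤ k → k ≤ n → b' j ≤ b' k) :
    (∀ k, fkm m b n k = fkm m b' n k) ↔
      (Finset.range (n + 1)).val.map (fun j : ℕ => (m : ℤ) * j - b j) =
      (Finset.range (n + 1)).val.map (fun j : ℕ => (m : ℤ) * j - b' j) :=
  weight_equiv_iff_root_vector_general m n b b' hmono hmono'
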